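/- The Weibull density f(x) = c·r·x^(r-1)·exp(-c·x^r) on (0,∞), with c > 0 and 0 < r < 1, is completely monotone. -/

import Mathlib

open Set Finset


/-- Pure algebra: Pascal-style binomial sum identity. -/
private lemma pascal_sum (A B : ℕ → ℝ) (n : ℕ) :
    ∑ k ∈ range (n + 1), (n.choose k : ℝ) * (A (k + 1) * B (n - k) + A k * B (n - k + 1)) =
      ∑ k ∈ range (n + 2), ((n + 1).choose k : ℝ) * (A k * B (n + 1 - k)) := by
  have h1 : ∀ k ∈ range (n + 1), (n.choose k : ℝ) * (A (k+1) * B (n-k) + A k * B (n-k+1))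
      = (n.choose k : ℝ) * (A (k+1) * B (n-k)) + (n.choose k : ℝ) * (A k * B (n+1-k)) := by
    intro k hk
    rw [Finset.mem_range] at hk
    have : n - k + 1 = n + 1 - k := by omega
    rw [this]; ring
  rw [Finset.sum_congr rfl h1, Finset.sum_add_distrib]
  -- RHS: split off k = 0
  rw [Finset.sum_range_succ' (fun k => ((n + 1).choose k : ℝ) * (A k * B (n + 1 - k))) (n+1)]
  -- second LHS sum: split off k = 0
  rw [Finset.sum_range_succ' (fun k => (n.choose k : ℝ) * (A k * B (n+1-k))) n]
  have h2 : ∀ k, ((n + 1).choose (k+1) : ℝ) = (n.choose k : ℝ) + (n.choose (k+1) : ℝ) := by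
    intro k; rw [Nat.choose_succ_succ]; push_cast; ring
  have h3 : ∑ k ∈ range (n+1), ((n+1).choose (k+1) : ℝ) * (A (k+1) * B (n+1-(k+1)))
      = ∑ k ∈ range (n+1), ((n.choose k : ℝ) * (A (k+1) * B (n-k))
          + (n.choose (k+1) : ℝ) * (A (k+1) * B (n-k))) := by
    refine Finset.sum_congr rfl fun k hk => ?_
    have : n + 1 - (k+1) = n - k := by omega
    rw [this, h2]; ring
  rw [h3, Finset.sum_add_distrib]
  have h4 : ∑ k ∈ range (n+1), (n.choose (k+1) : ℝ) * (A (k+1) * B (n-k))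
      = ∑ k ∈ range n, (n.choose (k+1) : ℝ) * (A (k+1) * B (n-k)) := by
    rw [Finset.sum_range_succ, Nat.choose_succ_self]; simp
  rw [h4]
  have h5 : ∑ k ∈ range n, (n.choose (k+1) : ℝ) * (A (k+1) * B (n+1-(k+1)))
      = ∑ k ∈ range n, (n.choose (k+1) : ℝ) * (A (k+1) * B (n-k)) := by
    refine Finset.sum_congr rfl fun k hk => ?_
    congr 3
    omega
  rw [h5]
  simp only [Nat.choose_zero_right, Nat.cast_one, Nat.sub_zero]
  ring

private lemma hasDerivAt_iter {s : Set ℝ} (hso : IsOpen s) {f : ℝ → ℝ}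
    (hf : ContDiffOn ℝ (⊤ : ℕ∞) f s) (k : ℕ) {x : ℝ} (hx : x ∈ s) :
    HasDerivAt (iteratedDerivWithin k f s) (iteratedDerivWithin (k + 1) f s x) x := by
  have hsU : UniqueDiffOn ℝ s := hso.uniqueDiffOn
  have hd : DifferentiableWithinAt ℝ (iteratedDerivWithin k f s) s x :=
    (hf.differentiableOn_iteratedDerivWithin (by exact_mod_cast ENat.coe_lt_top k) hsU) x hx
  have hda : DifferentiableAt ℝ (iteratedDerivWithin k f s) x :=
    hd.differentiableAt (hso.mem_nhds hx)
  have heq : deriv (iteratedDerivWithin k f s) x = iteratedDerivWithin (k + 1) f s x := by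
    rw [← derivWithin_of_isOpen hso hx, ← iteratedDerivWithin_succ]
  exact heq ▸ hda.hasDerivAt

private lemma leibniz_iter {s : Set ℝ} (hso : IsOpen s) {f g : ℝ → ℝ}
    (hf : ContDiffOn ℝ (⊤ : ℕ∞) f s) (hg : ContDiffOn ℝ (⊤ : ℕ∞) g s) :
    ∀ n : ℕ, ∀ x ∈ s, iteratedDerivWithin n (fun y => f y * g y) s x =
      ∑ k ∈ range (n + 1), (n.choose k : ℝ) *
        (iteratedDerivWithin k f s x * iteratedDerivWithin (n - k) g s x) := by
  have hsU : UniqueDiffOn ℝ s := hso.uniqueDiffOn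
  intro n
  induction n with
  | zero => intro x hx; simp
  | succ n IH =>
    intro x hx
    rw [iteratedDerivWithin_succ,
      derivWithin_congr (fun y hy => IH y hy) (IH x hx),
      derivWithin_of_isOpen hso hx]
    have hterm : ∀ k ∈ range (n + 1), HasDerivAt
        (fun y => (n.choose k : ℝ) *
          (iteratedDerivWithin k f s y * iteratedDerivWithin (n - k) g s y))
        ((n.choose k : ℝ) *
          (iteratedDerivWithin (k + 1) f s x * iteratedDerivWithin (n - k) g s x +
           iteratedDerivWithin k f s x * iteratedDerivWithin (n - k + 1) g s x)) x := by
      intro k _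
      exact (((hasDerivAt_iter hso hf k hx).mul (hasDerivAt_iter hso hg (n - k) hx))).const_mul _
    have hsum := HasDerivAt.fun_sum hterm
    rw [hsum.deriv]
    have := pascal_sum (fun k => iteratedDerivWithin k f s x)
      (fun k => iteratedDerivWithin k g s x) n
    simpa [mul_add] using this

private lemma contDiffOn_rpow (p : ℝ) : ContDiffOn ℝ (⊤ : ℕ∞) (fun x : ℝ => x ^ p) (Set.Ioi 0) :=
  fun x hx => (Real.contDiffAt_rpow_const_of_ne (ne_of_gt (mem_Ioi.mp hx))).contDiffWithinAt

private lemma iter_rpow (p : ℝ) :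
    ∀ n : ℕ, ∀ x ∈ Set.Ioi (0:ℝ), iteratedDerivWithin n (fun y : ℝ => y ^ p) (Set.Ioi 0) x
      = (∏ i ∈ range n, (p - i)) * x ^ (p - n) := by
  intro n
  induction n with
  | zero => intro x hx; simp
  | succ n IH =>
    intro x hx
    have hsU : UniqueDiffOn ℝ (Set.Ioi (0:ℝ)) := isOpen_Ioi.uniqueDiffOn
    rw [iteratedDerivWithin_succ,
      derivWithin_congr (fun y hy => IH y hy) (IH x hx),
      derivWithin_of_isOpen isOpen_Ioi hx]
    have hx0 : (0:ℝ) < x := hx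
    have h1 : HasDerivAt (fun y : ℝ => (∏ i ∈ range n, (p - i)) * y ^ (p - (n:ℝ)))
        ((∏ i ∈ range n, (p - i)) * ((p - n) * x ^ (p - (n:ℝ) - 1))) x :=
      HasDerivAt.const_mul (𝕜 := ℝ) (∏ i ∈ range n, (p - (i:ℝ))) (Real.hasDerivAt_rpow_const (Or.inl hx0.ne'))
    rw [h1.deriv, prod_range_succ]
    have h2 : p - ((n:ℝ) + 1) = p - (n:ℝ) - 1 := by ring
    push_cast
    rw [h2]; ring

private lemma cm_rpow {p : ℝ} (hp : p ≤ 0) (n : ℕ) {x : ℝ} (hx : x ∈ Set.Ioi (0:ℝ)) :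
    0 ≤ (-1:ℝ)^n * iteratedDerivWithin n (fun y : ℝ => y ^ p) (Set.Ioi 0) x := by
  rw [iter_rpow p n x hx]
  have h1 : (-1:ℝ)^n * (∏ i ∈ range n, (p - i)) = ∏ i ∈ range n, ((i:ℝ) - p) := by
    rw [← Finset.card_range n, ← Finset.prod_const (-1:ℝ), Finset.card_range,
      ← Finset.prod_mul_distrib]
    exact Finset.prod_congr rfl fun i _ => by ring
  have h2 : 0 ≤ ∏ i ∈ range n, ((i:ℝ) - p) :=
    Finset.prod_nonneg fun i _ => sub_nonneg.mpr (hp.trans (Nat.cast_nonneg i))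
  rw [← mul_assoc, h1]
  exact mul_nonneg h2 (Real.rpow_nonneg (le_of_lt (mem_Ioi.mp hx)) _)

private lemma contDiffOn_E (c r : ℝ) :
    ContDiffOn ℝ (⊤ : ℕ∞) (fun x : ℝ => Real.exp (-c * x ^ r)) (Set.Ioi 0) :=
  (contDiffOn_const.mul (contDiffOn_rpow r)).exp

private lemma derivWithin_E (c r : ℝ) :
    ∀ y ∈ Set.Ioi (0:ℝ), derivWithin (fun x : ℝ => Real.exp (-c * x ^ r)) (Set.Ioi 0) y
      = -(c * r) * (y ^ (r - 1) * Real.exp (-c * y ^ r)) := by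
  intro y hy
  have hy0 : (0:ℝ) < y := hy
  have h1 : HasDerivAt (fun z : ℝ => -c * z ^ r) (-c * (r * y ^ (r - 1))) y :=
    HasDerivAt.const_mul (𝕜 := ℝ) (-c) (Real.hasDerivAt_rpow_const (Or.inl hy0.ne'))
  have h2 := h1.exp
  rw [derivWithin_of_isOpen isOpen_Ioi hy, h2.deriv]
  ring

private lemma sum_sign (A B : ℕ → ℝ) (m : ℕ)
    (hA : ∀ k, 0 ≤ (-1:ℝ)^k * A k) (hB : ∀ k, k ≤ m → 0 ≤ (-1:ℝ)^k * B k) :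
    0 ≤ (-1:ℝ)^m * ∑ k ∈ range (m+1), (m.choose k : ℝ) * (A k * B (m-k)) := by
  rw [Finset.mul_sum]
  refine Finset.sum_nonneg fun k hk => ?_
  rw [Finset.mem_range] at hk
  have hpow : (-1:ℝ)^m = (-1:ℝ)^k * (-1)^(m-k) := by rw [← pow_add]; congr 1; omega
  calc (0:ℝ) ≤ ((m.choose k : ℝ)) * (((-1)^k * A k) * ((-1)^(m-k) * B (m-k))) :=
        mul_nonneg (Nat.cast_nonneg _) (mul_nonneg (hA k) (hB (m-k) (by omega)))
    _ = (-1)^m * ((m.choose k : ℝ) * (A k * B (m-k))) := by rw [hpow]; ring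

private lemma cm_exp (c r : ℝ) (hc : 0 ≤ c) (hr0 : 0 ≤ r) (hr1 : r ≤ 1) :
    ∀ n : ℕ, ∀ x ∈ Set.Ioi (0:ℝ),
      0 ≤ (-1:ℝ)^n * iteratedDerivWithin n (fun y : ℝ => Real.exp (-c * y ^ r))
        (Set.Ioi 0) x := by
  have hsU : UniqueDiffOn ℝ (Set.Ioi (0:ℝ)) := isOpen_Ioi.uniqueDiffOn
  intro n
  induction n using Nat.strong_induction_on with
  | _ n IH =>
    match n with
    | 0 => intro x hx; simpa using Real.exp_nonneg _
    | (m+1) =>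
      intro x hx
      rw [iteratedDerivWithin_succ',
        iteratedDerivWithin_congr (derivWithin_E c r) hx,
        iteratedDerivWithin_const_mul hx hsU (-(c*r))
          (((contDiffOn_rpow (r-1)).mul (contDiffOn_E c r)).of_le (by exact_mod_cast le_top) x hx),
        leibniz_iter isOpen_Ioi (contDiffOn_rpow (r-1)) (contDiffOn_E c r) m x hx]
      have hS := sum_sign
        (fun k => iteratedDerivWithin k (fun y : ℝ => y ^ (r-1)) (Set.Ioi 0) x)
        (fun k => iteratedDerivWithin k (fun y : ℝ => Real.exp (-c * y ^ r)) (Set.Ioi 0) x)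
        m (fun k => cm_rpow (by linarith) k hx)
        (fun k hk => IH k (by omega) x hx)
      set S := ∑ k ∈ range (m+1), (m.choose k : ℝ) *
        (iteratedDerivWithin k (fun y : ℝ => y ^ (r-1)) (Set.Ioi 0) x *
         iteratedDerivWithin (m-k) (fun y : ℝ => Real.exp (-c * y ^ r)) (Set.Ioi 0) x) with hSdef
      have heq : (-1:ℝ)^(m+1) * (-(c * r) * S) = (c * r) * ((-1:ℝ)^m * S) := by
        rw [pow_succ]; ring
      rw [heq]
      exact mul_nonneg (mul_nonneg hc hr0) hS


def CompletelyMonotoneOn (f : ℝ → ℝ) : Prop :=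
  ContDiffOn ℝ (⊤ : ℕ∞) f (Set.Ioi 0) ∧
  ∀ (n : ℕ), ∀ x ∈ Set.Ioi (0 : ℝ),
    0 ≤ (-1 : ℝ) ^ n * iteratedDerivWithin n f (Set.Ioi 0) x

/-- The Weibull density `f(x) = c r x^(r-1) exp(-c x^r)`, `c > 0`, `0 < r < 1`,
is completely monotone on `(0,∞)`. -/
theorem weibull_completelyMonotone (c r : ℝ) (hc : 0 < c) (hr0 : 0 < r) (hr1 : r < 1) :
    CompletelyMonotoneOn (fun x => c * r * x ^ (r - 1) * Real.exp (-c * x ^ r)) := by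
  have hsU : UniqueDiffOn ℝ (Set.Ioi (0:ℝ)) := isOpen_Ioi.uniqueDiffOn
  refine ⟨?_, ?_⟩
  · exact (contDiffOn_const.mul (contDiffOn_rpow (r-1))).mul (contDiffOn_E c r)
  · intro n x hx
    have hEq : Set.EqOn (fun x => c * r * x ^ (r - 1) * Real.exp (-c * x ^ r))
        (fun y : ℝ => (c * r) * (y ^ (r - 1) * Real.exp (-c * y ^ r))) (Set.Ioi 0) :=
      fun y _ => by ring
    rw [iteratedDerivWithin_congr hEq hx,
      iteratedDerivWithin_const_mul hx hsU (c*r)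
        (((contDiffOn_rpow (r-1)).mul (contDiffOn_E c r)).of_le (by exact_mod_cast le_top) x hx),
      leibniz_iter isOpen_Ioi (contDiffOn_rpow (r-1)) (contDiffOn_E c r) n x hx]
    have hS := sum_sign
      (fun k => iteratedDerivWithin k (fun y : ℝ => y ^ (r-1)) (Set.Ioi 0) x)
      (fun k => iteratedDerivWithin k (fun y : ℝ => Real.exp (-c * y ^ r)) (Set.Ioi 0) x)
      n (fun k => cm_rpow (by linarith) k hx)
      (fun k _ => cm_exp c r hc.le hr0.le hr1.le k x hx)
    set S := ∑ k ∈ range (n+1), (n.choose k : ℝ) *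
      (iteratedDerivWithin k (fun y : ℝ => y ^ (r-1)) (Set.Ioi 0) x *
       iteratedDerivWithin (n-k) (fun y : ℝ => Real.exp (-c * y ^ r)) (Set.Ioi 0) x) with hSdef
    have heq2 : (-1:ℝ)^n * ((c * r) * S) = (c * r) * ((-1:ℝ)^n * S) := by ring
    rw [heq2]
    exact mul_nonneg (by positivity) hS
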